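/- Let W be a set of nonzero arithmetic functions whose orders v(f) (f ∈ W) are multiplicatively independent natural numbers. Then W is algebraically independent over ℂ in the Dirichlet convolution ring. -/

import Mathlib

open ArithmeticFunction
open scoped Classical

/-- The embedding of `ℂ` into the Dirichlet ring of arithmetic functions,
sending `c` to the function with value `c` at `1` and `0` elsewhere. -/
noncomputable def CC : ℂ →+* ArithmeticFunction ℂ where
  toFun c := ⟨fun n => if n = 1 then c else 0, by simp⟩
  map_zero' := by ext n; simp
  map_one' := by ext n; simp [ArithmeticFunction.one_apply]
  map_add' a b := by ext n; show (if n = 1 then a + b else 0) = (if n = 1 then a else 0) + (if n = 1 then b else 0); by_cases h : n = 1 <;> simp [h]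
  map_mul' a b := by
    ext n
    erw [ArithmeticFunction.mul_apply]
    by_cases h : n = 1
    · subst h
      rw [show Nat.divisorsAntidiagonal 1 = {(1,1)} from rfl]
      simp
    · rw [Finset.sum_eq_zero]
      · simp [h]
      · rintro ⟨d, e⟩ hde
        rw [Nat.mem_divisorsAntidiagonal] at hde
        rcases Decidable.eq_or_ne d 1 with hd | hd
        · have : e ≠ 1 := by rintro rfl; exact h (by simp [← hde.1, hd])
          simp [this]
        · simp [hd]

/-- The order `v f` of an arithmetic function: the least element of the support
(`sInf` of the empty set is `0` for `f = 0`; that case is always excluded by hypotheses). -/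
noncomputable def ordN (f : ArithmeticFunction ℂ) : ℕ := sInf {n : ℕ | f n ≠ 0}

/-- The order as an extended natural number, `⊤` for `f = 0`. -/
noncomputable def ordE (f : ArithmeticFunction ℂ) : ℕ∞ :=
  sInf ((fun n : ℕ => (n : ℕ∞)) '' {n : ℕ | f n ≠ 0})

/-- The norm `‖f‖ = 1/v(f)`, with `1/∞ = 0`. -/
noncomputable def nrm (f : ArithmeticFunction ℂ) : ℝ :=
  if f = 0 then 0 else 1 / (ordN f : ℝ)

/-- Extension of an arithmetic function to `ℝ`, vanishing off `ℕ`. -/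
noncomputable def extR (f : ArithmeticFunction ℂ) (x : ℝ) : ℂ :=
  if h : ∃ n : ℕ, (n : ℝ) = x then f h.choose else 0

/-- The exponential map `Exp f = exp(f 1) * ∑ (f - f 1)^k / k!` of the Dirichlet ring.
Since `(f - f 1)^k` has order `≥ 2^k`, the value of the infinite series at `n` equals the
value of the partial sum up to `k = n`. -/
noncomputable def ExpA (f : ArithmeticFunction ℂ) : ArithmeticFunction ℂ :=
  ⟨fun n => Complex.exp (f 1) *
      ((∑ k ∈ Finset.range (n + 1),
        CC ((Nat.factorial k : ℂ)⁻¹) * (f - CC (f 1)) ^ k) n), by simp⟩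

/-- The `p`-basic derivation `(∂_p f) n = v_p (n p) • f (n p)`. -/
noncomputable def DP (p : ℕ) (f : ArithmeticFunction ℂ) : ArithmeticFunction ℂ :=
  ⟨fun n => (padicValNat p (n * p) : ℂ) * f (n * p), by simp⟩

/-- The log-derivation `(∂_L f) n = log n * f n`. -/
noncomputable def DL (f : ArithmeticFunction ℂ) : ArithmeticFunction ℂ :=
  ⟨fun n => (Real.log n : ℂ) * f n, by simp⟩

/-- The pointwise multiplication operator `𝔪_g`. -/
noncomputable def MG (g f : ArithmeticFunction ℂ) : ArithmeticFunction ℂ :=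
  ⟨fun n => g n * f n, by simp⟩

/-- Integer powers `𝔪_g^i` of the pointwise multiplication operator:
`(𝔪_g^i f) n = (g n)^i * f n`. -/
noncomputable def MGi (g : ArithmeticFunction ℂ) (i : ℤ) (f : ArithmeticFunction ℂ) :
    ArithmeticFunction ℂ := ⟨fun n => g n ^ i * f n, by simp⟩

/-- `D` is a (ℂ-linear) derivation of the ring of arithmetic functions
under Dirichlet convolution. -/
def IsDerivationA (D : ArithmeticFunction ℂ → ArithmeticFunction ℂ) : Prop :=
  (∀ f g, D (f + g) = D f + D g) ∧
  (∀ (c : ℂ) (f), D (CC c * f) = CC c * D f) ∧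
  (∀ f g, D (f * g) = D f * g + f * D g)

/-- Convergence of a sequence of arithmetic functions in the norm topology. -/
def TendstoA (s : ℕ → ArithmeticFunction ℂ) (l : ArithmeticFunction ℂ) : Prop :=
  Filter.Tendsto (fun m => nrm (s m - l)) Filter.atTop (nhds 0)

/-- (Sequential) continuity of a map in the norm topology, which for this
ultrametric is equivalent to continuity. -/
def ContinuousA (D : ArithmeticFunction ℂ → ArithmeticFunction ℂ) : Prop :=
  ∀ (s : ℕ → ArithmeticFunction ℂ) (l), TendstoA s l → TendstoA (fun m => D (s m)) (D l)

/-- The indicator function `e_m` of the singleton `{m}`. -/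
noncomputable def En (m : ℕ) : ArithmeticFunction ℂ :=
  ⟨fun n => if 0 < n ∧ n = m then 1 else 0, by simp⟩

/-- The constant one arithmetic function `𝟙`. -/
noncomputable def OneA : ArithmeticFunction ℂ := ⟨fun n => if n = 0 then 0 else 1, by simp⟩

/-- The ℂ-algebra structure of the ring of arithmetic functions, via `CC`. -/
noncomputable instance : Algebra ℂ (ArithmeticFunction ℂ) := CC.toAlgebra

/-! The order `v` turns Dirichlet convolution into multiplication: the value of `f * g` at
`v f * v g` is the product of the leading values `f (v f) * g (v g)`, and `f * g` vanishes below
that point. Hence a monomial `∏ fᵢ ^ kᵢ` in elements of `W` has order `∏ v(fᵢ) ^ kᵢ` and a nonzero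
leading value. Multiplicative independence of the orders makes these orders distinct for
distinct monomials, so in a nonzero polynomial the monomial of least order cannot be cancelled
and the evaluation is nonzero at that point. -/

namespace ArithmeticFunction

variable {R : Type*}

def HasLeadingTerm [Zero R] (F : ArithmeticFunction R) (N : ℕ) (c : R) : Prop :=
  (∀ n < N, F n = 0) ∧ F N = c

theorem finset_sum_apply [AddCommMonoid R] {ι : Type*} (s : Finset ι)
    (F : ι → ArithmeticFunction R) (n : ℕ) : (∑ i ∈ s, F i) n = ∑ i ∈ s, F i n :=
  map_sum (⟨⟨fun f => f n, zero_apply⟩, fun _ _ => add_apply⟩ : ArithmeticFunction R →+ R) F s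

theorem hasLeadingTerm_one [Semiring R] :
    HasLeadingTerm (1 : ArithmeticFunction R) 1 1 :=
  ⟨fun n hn => by rw [Nat.lt_one_iff.mp hn, map_zero], one_one⟩

namespace HasLeadingTerm

theorem mul [Semiring R] {F G : ArithmeticFunction R} {N M : ℕ} {c d : R}
    (hF : HasLeadingTerm F N c) (hG : HasLeadingTerm G M d) :
    HasLeadingTerm (F * G) (N * M) (c * d) := by
  have hvanish : ∀ a b, a * b ≤ N * M → (a, b) ≠ (N, M) → a ≠ 0 → b ≠ 0 → F a * G b = 0 := by
    intro a b hab hne ha hb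
    by_cases haN : a < N
    · simp [hF.1 a haN]
    by_cases hbM : b < M
    · simp [hG.1 b hbM]
    push Not at haN hbM
    have hNa : a ≤ N :=
      Nat.le_of_mul_le_mul_right (hab.trans (Nat.mul_le_mul_left N hbM)) (Nat.pos_of_ne_zero hb)
    have hMb : b ≤ M :=
      Nat.le_of_mul_le_mul_left (hab.trans (Nat.mul_le_mul_right M haN)) (Nat.pos_of_ne_zero ha)
    exact absurd (by rw [le_antisymm hNa haN, le_antisymm hMb hbM]) hne
  refine ⟨fun n hn => ?_, ?_⟩
  · rw [mul_apply]
    refine Finset.sum_eq_zero fun ⟨a, b⟩ hab => ?_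
    obtain ⟨rfl, hn0⟩ := Nat.mem_divisorsAntidiagonal.mp hab
    exact hvanish a b hn.le (by rintro ⟨⟩; exact hn.false) (left_ne_zero_of_mul hn0)
      (right_ne_zero_of_mul hn0)
  rcases Nat.eq_zero_or_pos N with rfl | hN
  · simp [← hF.2]
  rcases Nat.eq_zero_or_pos M with rfl | hM
  · simp [← hG.2]
  have hmem : (N, M) ∈ Nat.divisorsAntidiagonal (N * M) :=
    Nat.mem_divisorsAntidiagonal.mpr ⟨rfl, by positivity⟩
  rw [mul_apply, Finset.sum_eq_single_of_mem (N, M) hmem fun ⟨a, b⟩ hab hne => ?_, hF.2, hG.2]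
  obtain ⟨hab, hn0⟩ := Nat.mem_divisorsAntidiagonal.mp hab
  rw [← hab] at hn0
  exact hvanish a b hab.le hne (left_ne_zero_of_mul hn0) (right_ne_zero_of_mul hn0)

theorem pow [Semiring R] {F : ArithmeticFunction R} {N : ℕ} {c : R}
    (h : HasLeadingTerm F N c) (k : ℕ) : HasLeadingTerm (F ^ k) (N ^ k) (c ^ k) := by
  induction k with
  | zero => simpa using hasLeadingTerm_one
  | succ k ih => simpa only [pow_succ] using ih.mul h

theorem prod [CommSemiring R] {ι : Type*} {s : Finset ι} {F : ι → ArithmeticFunction R}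
    {N : ι → ℕ} {c : ι → R} (h : ∀ i ∈ s, HasLeadingTerm (F i) (N i) (c i)) :
    HasLeadingTerm (∏ i ∈ s, F i) (∏ i ∈ s, N i) (∏ i ∈ s, c i) := by
  induction s using Finset.cons_induction with
  | empty => simpa using hasLeadingTerm_one
  | cons a s ha ih =>
    simp only [Finset.prod_cons]
    exact (h a (s.mem_cons_self a)).mul (ih fun i hi => h i (Finset.mem_cons_of_mem hi))

theorem sum [AddCommMonoid R] {ι : Type*} {s : Finset ι} {F : ι → ArithmeticFunction R}
    {N : ι → ℕ} {c : ι → R} (h : ∀ i ∈ s, HasLeadingTerm (F i) (N i) (c i))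
    (hN : Set.InjOn N s) {i₀ : ι} (hi₀ : i₀ ∈ s) (hmin : ∀ i ∈ s, N i₀ ≤ N i) :
    HasLeadingTerm (∑ i ∈ s, F i) (N i₀) (c i₀) := by
  have hlt : ∀ i ∈ s, i ≠ i₀ → N i₀ < N i := fun i hi hne =>
    (hmin i hi).lt_of_ne fun heq => hne (hN hi hi₀ heq.symm)
  refine ⟨fun n hn => ?_, ?_⟩
  · rw [finset_sum_apply]
    exact Finset.sum_eq_zero fun i hi => (h i hi).1 n (hn.trans_le (hmin i hi))
  · rw [finset_sum_apply, Finset.sum_eq_single_of_mem i₀ hi₀ fun i hi hne =>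
      (h i hi).1 _ (hlt i hi hne)]
    exact (h i₀ hi₀).2

end HasLeadingTerm

end ArithmeticFunction

open ArithmeticFunction MvPolynomial

theorem apply_eq_zero_of_lt_ordN {f : ArithmeticFunction ℂ} {n : ℕ} (h : n < ordN f) :
    f n = 0 :=
  not_not.mp (Nat.notMem_of_lt_sInf h)

theorem ordN_apply_ne_zero {f : ArithmeticFunction ℂ} (hf : f ≠ 0) : f (ordN f) ≠ 0 :=
  Nat.sInf_mem (DFunLike.ne_iff.mp hf)

theorem ordN_ne_zero {f : ArithmeticFunction ℂ} (hf : f ≠ 0) : ordN f ≠ 0 := fun h =>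
  ordN_apply_ne_zero hf (by rw [h, f.map_zero])

theorem hasLeadingTerm_ordN (f : ArithmeticFunction ℂ) :
    HasLeadingTerm f (ordN f) (f (ordN f)) :=
  ⟨fun _ => apply_eq_zero_of_lt_ordN, rfl⟩

theorem hasLeadingTerm_algebraMap (c : ℂ) :
    HasLeadingTerm (algebraMap ℂ (ArithmeticFunction ℂ) c) 1 c := by
  refine ⟨fun n hn => ?_, ?_⟩ <;> show CC c _ = _
  · rw [Nat.lt_one_iff.mp hn, ArithmeticFunction.map_zero]
  · rfl

theorem hasLeadingTerm_aeval_monomial {ι : Type*} (x : ι → ArithmeticFunction ℂ)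
    (m : ι →₀ ℕ) (a : ℂ) :
    HasLeadingTerm (aeval x (monomial m a)) (m.prod fun i k => ordN (x i) ^ k)
      (a * m.prod fun i k => x i (ordN (x i)) ^ k) := by
  rw [aeval_monomial]
  have := (hasLeadingTerm_algebraMap a).mul
    (HasLeadingTerm.prod (s := m.support) fun i _ => (hasLeadingTerm_ordN (x i)).pow (m i))
  rwa [one_mul] at this

theorem algebraicIndependent_of_injective_prod_ordN_pow {ι : Type*}
    {x : ι → ArithmeticFunction ℂ} (hx : ∀ i, x i ≠ 0)
    (hinj : Function.Injective fun m : ι →₀ ℕ => m.prod fun i k => ordN (x i) ^ k) :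
    AlgebraicIndependent ℂ x := by
  rw [algebraicIndependent_iff]
  intro p hp
  by_contra hp0
  obtain ⟨m₀, hm₀, hmin⟩ := p.support.exists_min_image
    (fun m => m.prod fun i k => ordN (x i) ^ k) (support_nonempty.mpr hp0)
  have hlead := HasLeadingTerm.sum (fun m _ => hasLeadingTerm_aeval_monomial x m (p.coeff m))
    hinj.injOn hm₀ hmin
  rw [← map_sum, ← as_sum, hp] at hlead
  refine mul_ne_zero (mem_support_iff.mp hm₀) ?_ hlead.2.symm
  exact Finsupp.prod_ne_zero_iff.mpr fun i _ => pow_ne_zero _ (ordN_apply_ne_zero (hx i))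

def MulIndependent {ι : Type*} (v : ι → ℕ) : Prop :=
  ∀ (s : Finset ι) (a : ι → ℤ), ∏ i ∈ s, (v i : ℚ) ^ a i = 1 → ∀ i ∈ s, a i = 0

namespace MulIndependent

variable {ι : Type*} {v : ι → ℕ}

theorem of_fin
    (hv : ∀ (k : ℕ) (f : Fin k → ι), Function.Injective f →
      ∀ a : Fin k → ℤ, ∏ i, (v (f i) : ℚ) ^ a i = 1 → ∀ i, a i = 0) :
    MulIndependent v := by
  intro s a h i hi
  set e := s.equivFin
  have hprod : ∏ j, (v (e.symm j) : ℚ) ^ a (e.symm j) = 1 := by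
    rw [e.symm.prod_comp fun j : s => (v j : ℚ) ^ a j, s.prod_coe_sort fun j => (v j : ℚ) ^ a j, h]
  simpa using hv s.card (fun j => e.symm j) (Subtype.val_injective.comp e.symm.injective)
    (fun j => a (e.symm j)) hprod (e ⟨i, hi⟩)

theorem injective_finsuppProd (hv : MulIndependent v) (hv0 : ∀ i, v i ≠ 0) :
    Function.Injective fun m : ι →₀ ℕ => m.prod fun i k => v i ^ k := by
  intro m m' (h : m.prod (fun i k => v i ^ k) = m'.prod fun i k => v i ^ k)
  set s := m.support ∪ m'.support
  have cast_prod (n : ι →₀ ℕ) (hn : n.support ⊆ s) :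
      ((n.prod fun i k => v i ^ k : ℕ) : ℚ) = ∏ i ∈ s, (v i : ℚ) ^ (n i : ℤ) := by
    rw [Finsupp.prod_of_support_subset n hn _ fun _ _ => pow_zero _]
    push_cast
    simp only [zpow_natCast]
  have hprod : ∏ i ∈ s, (v i : ℚ) ^ ((m i : ℤ) - m' i) = 1 := by
    have hne : ((m'.prod fun i k => v i ^ k : ℕ) : ℚ) ≠ 0 := by
      simpa using Finsupp.prod_ne_zero_iff.mpr fun i _ => pow_ne_zero _ (hv0 i)
    rw [Finset.prod_congr rfl fun i _ =>
        zpow_sub₀ (Nat.cast_ne_zero.mpr (hv0 i) : (v i : ℚ) ≠ 0) _ _,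
      Finset.prod_div_distrib, ← cast_prod m Finset.subset_union_left,
      ← cast_prod m' Finset.subset_union_right, h]
    exact div_self hne
  ext i
  by_cases hi : i ∈ s
  · exact_mod_cast sub_eq_zero.mp (hv s _ hprod i hi)
  · simp only [s, Finset.mem_union, Finsupp.mem_support_iff, not_or, not_not] at hi
    rw [hi.1, hi.2]

end MulIndependent

/-- If `W` is a set of nonzero arithmetic functions whose orders are multiplicatively
independent, then `W` is algebraically independent over `ℂ` in the Dirichlet ring. -/
theorem stmt14 (W : Set (ArithmeticFunction ℂ)) (h0 : ∀ f ∈ W, f ≠ 0)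
    (hmi : ∀ (k : ℕ) (f : Fin k → ArithmeticFunction ℂ), (∀ i, f i ∈ W) →
      Function.Injective f →
      ∀ a : Fin k → ℤ, (∏ i, (ordN (f i) : ℚ) ^ (a i)) = 1 → ∀ i, a i = 0) :
    AlgebraicIndependent ℂ ((↑) : W → ArithmeticFunction ℂ) := by
  have hW (f : W) : (f : ArithmeticFunction ℂ) ≠ 0 := h0 f f.2
  have hind : MulIndependent fun f : W => ordN f := .of_fin fun k f hf =>
    hmi k (fun i => f i) (fun i => (f i).2) (Subtype.val_injective.comp hf)
  exact algebraicIndependent_of_injective_prod_ordN_pow hW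
    (hind.injective_finsuppProd fun f => ordN_ne_zero (hW f))
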